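/- Let δ ~ Laplace(0,λ) be independent of X ~ N(μ,σ²). Then the density of Z = X + δ at y is (1/(4λ))[ e^{(μ−y)/λ + σ²/(2λ²)} (1 + erf((y−μ)/(σ√2) − σ/(λ√2))) + e^{(y−μ)/λ + σ²/(2λ²)} (1 − erf((y−μ)/(σ√2) + σ/(λ√2))) ]. -/
import Mathlib


open Real MeasureTheory

/-- The error function `erf(t) = (2/√π) ∫₀ᵗ e^{−s²} ds`. -/
noncomputable def erf (t : ℝ) : ℝ :=
  (2 / Real.sqrt π) * ∫ s in (0 : ℝ)..t, Real.exp (-s ^ 2)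

open Set

lemma exp_sq_integrable : Integrable (fun s : ℝ => Real.exp (-s ^ 2)) := by
  have h := integrable_exp_neg_mul_sq (show (0:ℝ) < 1 by norm_num)
  simpa using h

lemma erf_neg (t : ℝ) : erf (-t) = - erf t := by
  have h := intervalIntegral.integral_comp_neg (a := (0:ℝ)) (b := t)
    (fun s => Real.exp (-s ^ 2))
  simp only [neg_sq, neg_zero] at h
  rw [erf, erf, intervalIntegral.integral_symm, ← h]
  ring

lemma integral_Ioi_exp_neg_sq (c : ℝ) :
    ∫ s in Ioi c, Real.exp (-s ^ 2) = Real.sqrt π / 2 * (1 - erf c) := by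
  have hint := exp_sq_integrable
  have hπ : Real.sqrt π ≠ 0 := ne_of_gt (Real.sqrt_pos.mpr Real.pi_pos)
  have h1 : ∫ s in Iic (0:ℝ), Real.exp (-s ^ 2) = Real.sqrt π / 2 := by
    have h := integral_comp_neg_Iic (0:ℝ) (fun s => Real.exp (-s ^ 2))
    simp only [neg_zero, neg_sq] at h
    rw [h]
    have h2 := integral_gaussian_Ioi 1
    simpa using h2
  have h2 : (∫ s in Iic c, Real.exp (-s ^ 2)) - ∫ s in Iic (0:ℝ), Real.exp (-s ^ 2)
      = ∫ s in (0:ℝ)..c, Real.exp (-s ^ 2) :=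
    intervalIntegral.integral_Iic_sub_Iic hint.integrableOn hint.integrableOn
  have h3 : (∫ s in Iic c, Real.exp (-s ^ 2)) + ∫ s in Ioi c, Real.exp (-s ^ 2)
      = Real.sqrt π := by
    rw [intervalIntegral.integral_Iic_add_Ioi hint.integrableOn hint.integrableOn]
    have := integral_gaussian 1
    simpa using this
  have h4 : Real.sqrt π / 2 * erf c = ∫ s in (0:ℝ)..c, Real.exp (-s ^ 2) := by
    rw [erf]
    field_simp
  rw [h1] at h2
  rw [mul_sub, mul_one, h4, ← h2]
  linarith

lemma integral_Ioi_comp_add_right (f : ℝ → ℝ) (a d : ℝ) :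
    ∫ x in Ioi a, f (x + d) = ∫ x in Ioi (a + d), f x := by
  have A : MeasurableEmbedding fun x : ℝ => x + d :=
    (Homeomorph.addRight d).isClosedEmbedding.measurableEmbedding
  have h := A.setIntegral_map (μ := volume) f (Ioi (a + d))
  rw [map_add_right_eq_self volume d] at h
  have hpre : (fun x : ℝ => x + d) ⁻¹' Ioi (a + d) = Ioi a := by
    ext x
    simp only [mem_preimage, mem_Ioi]
    constructor <;> intro <;> linarith
  rw [hpre] at h
  exact h.symm

lemma gauss_Ioi (m c : ℝ) (hc : 0 < c) :
    ∫ t in Ioi (0:ℝ), Real.exp (-((t - m) / c) ^ 2)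
      = c * (Real.sqrt π / 2) * (1 - erf (-m / c)) := by
  have h1 : ∫ t in Ioi (0:ℝ), Real.exp (-((t - m) / c) ^ 2)
      = ∫ t in Ioi (-m), Real.exp (-(t / c) ^ 2) := by
    have h := integral_Ioi_comp_add_right (fun u => Real.exp (-(u / c) ^ 2)) 0 (-m)
    simp only [zero_add] at h
    rw [← h]
    simp only [← sub_eq_add_neg]
  have h2 : ∫ t in Ioi (-m), Real.exp (-(t / c) ^ 2)
      = c * ∫ s in Ioi (-m / c), Real.exp (-s ^ 2) := by
    have h := integral_comp_mul_right_Ioi (fun s => Real.exp (-s ^ 2)) (-m)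
      (inv_pos.mpr hc)
    simp only [inv_inv, smul_eq_mul] at h
    rw [show (-m * c⁻¹ : ℝ) = -m / c by ring] at h
    rw [← h]
    simp only [div_eq_mul_inv]
  rw [h1, h2, integral_Ioi_exp_neg_sq]
  ring

/-- The density of the Normal–Laplace convolution `Z = X + δ`, with
`X ~ N(μ,σ²)` and `δ ~ Laplace(0,λ)` independent, is given by the stated
closed form involving `erf`. -/
theorem stmt_15 (μ σ lam y : ℝ) (hσ : 0 < σ) (hlam : 0 < lam) :
    ∫ t : ℝ,
        (1 / (2 * lam)) * Real.exp (-|t| / lam) *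
          ((2 * π * σ ^ 2) ^ (-(1 : ℝ) / 2) *
            Real.exp (-(y - t - μ) ^ 2 / (2 * σ ^ 2)))
      = (1 / (4 * lam)) *
          (Real.exp ((μ - y) / lam + σ ^ 2 / (2 * lam ^ 2)) *
              (1 + erf ((y - μ) / (σ * Real.sqrt 2) - σ / (lam * Real.sqrt 2)))
            + Real.exp ((y - μ) / lam + σ ^ 2 / (2 * lam ^ 2)) *
              (1 - erf ((y - μ) / (σ * Real.sqrt 2) + σ / (lam * Real.sqrt 2)))) := by
  have h2pi : (0:ℝ) < 2 * π * σ ^ 2 := by positivity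
  have hs2 : (0:ℝ) < Real.sqrt 2 := by positivity
  set c : ℝ := σ * Real.sqrt 2 with hcdef
  have hc : 0 < c := by positivity
  have hc2 : c ^ 2 = 2 * σ ^ 2 := by
    rw [hcdef, mul_pow, Real.sq_sqrt (by norm_num : (0:ℝ) ≤ 2)]
    ring
  set K : ℝ := (2 * π * σ ^ 2) ^ (-(1:ℝ) / 2) with hK
  have hKc : K * (c * (Real.sqrt π / 2)) = 1 / 2 := by
    have hKval : K = (Real.sqrt (2 * π) * σ)⁻¹ := by
      rw [hK, neg_div, Real.rpow_neg h2pi.le, ← Real.sqrt_eq_rpow]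
      congr 1
      rw [show (2 * π * σ ^ 2 : ℝ) = (2 * π) * σ ^ 2 by ring,
        Real.sqrt_mul (by positivity), Real.sqrt_sq hσ.le]
    rw [hKval, hcdef, Real.sqrt_mul (by norm_num : (0:ℝ) ≤ 2) π]
    have hπ : (0:ℝ) < Real.sqrt π := Real.sqrt_pos.mpr Real.pi_pos
    field_simp
  set m₁ : ℝ := (y - μ) - σ ^ 2 / lam with hm1
  set m₂ : ℝ := (y - μ) + σ ^ 2 / lam with hm2
  set E₁ : ℝ := (μ - y) / lam + σ ^ 2 / (2 * lam ^ 2) with hE1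
  set E₂ : ℝ := (y - μ) / lam + σ ^ 2 / (2 * lam ^ 2) with hE2
  have hgauss : ∀ m : ℝ, Integrable (fun t : ℝ => Real.exp (-((t - m) / c) ^ 2)) := by
    intro m
    have h0 : Integrable (fun x : ℝ => Real.exp (-(c ^ 2)⁻¹ * x ^ 2)) :=
      integrable_exp_neg_mul_sq (by positivity)
    have h := h0.comp_sub_right m
    refine h.congr (Filter.Eventually.of_forall fun t => ?_)
    rw [Real.exp_eq_exp, div_pow]
    field_simp
  have hpt1 : ∀ t ∈ Ioi (0:ℝ),
      (1 / (2 * lam)) * Real.exp (-|t| / lam) *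
          (K * Real.exp (-(y - t - μ) ^ 2 / (2 * σ ^ 2)))
        = (1 / (2 * lam)) * K * Real.exp E₁ * Real.exp (-((t - m₁) / c) ^ 2) := by
    intro t ht
    rw [abs_of_pos ht]
    have hexp : Real.exp (-t / lam) * Real.exp (-(y - t - μ) ^ 2 / (2 * σ ^ 2))
        = Real.exp E₁ * Real.exp (-((t - m₁) / c) ^ 2) := by
      rw [← Real.exp_add, ← Real.exp_add, Real.exp_eq_exp]
      rw [div_pow, hc2, hE1, hm1]
      field_simp
      ring
    linear_combination (1 / (2 * lam)) * K * hexp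
  have hpt2 : ∀ t ∈ Iic (0:ℝ),
      (1 / (2 * lam)) * Real.exp (-|t| / lam) *
          (K * Real.exp (-(y - t - μ) ^ 2 / (2 * σ ^ 2)))
        = (1 / (2 * lam)) * K * Real.exp E₂ * Real.exp (-((t - m₂) / c) ^ 2) := by
    intro t ht
    rw [abs_of_nonpos ht]
    have hexp : Real.exp (- -t / lam) * Real.exp (-(y - t - μ) ^ 2 / (2 * σ ^ 2))
        = Real.exp E₂ * Real.exp (-((t - m₂) / c) ^ 2) := by
      rw [← Real.exp_add, ← Real.exp_add, Real.exp_eq_exp]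
      rw [div_pow, hc2, hE2, hm2]
      field_simp
      ring
    linear_combination (1 / (2 * lam)) * K * hexp
  have hint1 : IntegrableOn (fun t : ℝ =>
      (1 / (2 * lam)) * Real.exp (-|t| / lam) *
        (K * Real.exp (-(y - t - μ) ^ 2 / (2 * σ ^ 2)))) (Ioi 0) := by
    refine (((hgauss m₁).const_mul ((1 / (2 * lam)) * K * Real.exp E₁)).integrableOn).congr_fun
      (fun t ht => (hpt1 t ht).symm) measurableSet_Ioi
  have hint2 : IntegrableOn (fun t : ℝ =>
      (1 / (2 * lam)) * Real.exp (-|t| / lam) *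
        (K * Real.exp (-(y - t - μ) ^ 2 / (2 * σ ^ 2)))) (Iic 0) := by
    refine (((hgauss m₂).const_mul ((1 / (2 * lam)) * K * Real.exp E₂)).integrableOn).congr_fun
      (fun t ht => (hpt2 t ht).symm) measurableSet_Iic
  have hIoi : ∫ t in Ioi (0:ℝ),
      (1 / (2 * lam)) * Real.exp (-|t| / lam) *
        (K * Real.exp (-(y - t - μ) ^ 2 / (2 * σ ^ 2)))
      = (1 / (2 * lam)) * K * Real.exp E₁ *
          (c * (Real.sqrt π / 2) * (1 + erf (m₁ / c))) := by
    rw [setIntegral_congr_fun measurableSet_Ioi hpt1, MeasureTheory.integral_const_mul,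
      gauss_Ioi m₁ c hc, neg_div, erf_neg]
    ring
  have hIicG : ∫ t in Iic (0:ℝ), Real.exp (-((t - m₂) / c) ^ 2)
      = c * (Real.sqrt π / 2) * (1 - erf (m₂ / c)) := by
    have h := integral_comp_neg_Iic (0:ℝ) (fun u => Real.exp (-((u - -m₂) / c) ^ 2))
    simp only [neg_zero] at h
    have h' : ∫ x in Iic (0:ℝ), Real.exp (-((x - m₂) / c) ^ 2)
        = ∫ x in Iic (0:ℝ), Real.exp (-((-x - -m₂) / c) ^ 2) := by
      refine setIntegral_congr_fun measurableSet_Iic fun x _ => ?_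
      rw [Real.exp_eq_exp]
      ring
    rw [h', h, gauss_Ioi (-m₂) c hc, neg_neg]
  have hIic : ∫ t in Iic (0:ℝ),
      (1 / (2 * lam)) * Real.exp (-|t| / lam) *
        (K * Real.exp (-(y - t - μ) ^ 2 / (2 * σ ^ 2)))
      = (1 / (2 * lam)) * K * Real.exp E₂ *
          (c * (Real.sqrt π / 2) * (1 - erf (m₂ / c))) := by
    rw [setIntegral_congr_fun measurableSet_Iic hpt2, MeasureTheory.integral_const_mul, hIicG]
  have harg1 : (y - μ) / (σ * Real.sqrt 2) - σ / (lam * Real.sqrt 2) = m₁ / c := by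
    rw [hm1, hcdef]
    field_simp
  have harg2 : (y - μ) / (σ * Real.sqrt 2) + σ / (lam * Real.sqrt 2) = m₂ / c := by
    rw [hm2, hcdef]
    field_simp
  rw [← intervalIntegral.integral_Iic_add_Ioi hint2 hint1, hIic, hIoi, harg1, harg2]
  linear_combination (Real.exp E₁ * (1 + erf (m₁ / c))
    + Real.exp E₂ * (1 - erf (m₂ / c))) / (2 * lam) * hKc
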